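/- arXiv:2207.14035 — 3 statements merged into one kernel-verified Lean document; each statement's English description precedes it below -/
import Mathlib

section
/- Let A and Â be abelian groups, φ_l : A → Â and φ_m : Â → A group homomorphisms, and r, s, n integers with χ := n + r·s, such that φ_m ∘ φ_l equals multiplication by −χ on A and φ_l ∘ φ_m equals multiplication by −χ on Â. Define endomorphisms of A × Â by φ(x,y) := (φ_m(y) − s·x, φ_l(x) + r·y) and ψ(x,y) := (φ_m(y) − r·x, φ_l(x) + s·y). Then φ ∘ ψ and ψ ∘ φ both equal multiplication by −n on A × Â. -/
/-- The map `φ(x,y) = (φₘ(y) − s·x, φₗ(x) + r·y)` from the proof of Theorem 3.1. -/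
def phiMap {A Ahat : Type*} [AddCommGroup A] [AddCommGroup Ahat]
    (φl : A →+ Ahat) (φm : Ahat →+ A) (r s : ℤ) (p : A × Ahat) : A × Ahat :=
  (φm p.2 - s • p.1, φl p.1 + r • p.2)

/-- The map `ψ(x,y) = (φₘ(y) − r·x, φₗ(x) + s·y)` from the proof of Theorem 3.1. -/
def psiMap {A Ahat : Type*} [AddCommGroup A] [AddCommGroup Ahat]
    (φl : A →+ Ahat) (φm : Ahat →+ A) (r s : ℤ) (p : A × Ahat) : A × Ahat :=
  (φm p.2 - r • p.1, φl p.1 + s • p.2)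

/-- Proof of Theorem 3.1: `φ ∘ ψ = ψ ∘ φ = [−n]` on `A × Â`. -/
theorem phi_comp_psi_eq_neg_n_smul
    (A Ahat : Type*) [AddCommGroup A] [AddCommGroup Ahat]
    (φl : A →+ Ahat) (φm : Ahat →+ A) (r s n : ℤ)
    (hml : ∀ a : A, φm (φl a) = (-(n + r * s)) • a)
    (hlm : ∀ b : Ahat, φl (φm b) = (-(n + r * s)) • b) :
    (∀ p : A × Ahat, phiMap φl φm r s (psiMap φl φm r s p) = (-n) • p) ∧
    (∀ p : A × Ahat, psiMap φl φm r s (phiMap φl φm r s p) = (-n) • p) := by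

  constructor <;> intro ⟨x, y⟩ <;>
    simp only [phiMap, psiMap, map_add, map_sub, map_zsmul, hml, hlm, Prod.smul_mk,
      Prod.mk.injEq, smul_sub, smul_add, smul_smul] <;>
    constructor <;> module
end

section
/- Let A and Â be abelian groups, φ_l : A → Â and φ_m : Â → A group homomorphisms, and χ an integer such that φ_m ∘ φ_l equals multiplication by −χ on A and φ_l ∘ φ_m equals multiplication by −χ on Â. Let p be a prime and d ≥ 1 with p^d ∣ χ. Assume the torsion subgroups A[p^d] and Â[p^d] are finite of order p^{4d}, and that ker φ_l ∩ A[p^d] and ker φ_m ∩ Â[p^d] each have order p^{2d}. Then φ_m(Â[p^d]) = ker φ_l ∩ A[p^d], and symmetrically φ_l(A[p^d]) = ker φ_m ∩ Â[p^d]. In particular, every u ∈ ker φ_l ∩ A[p^d] has a preimage under φ_m in Â[p^d], and the set of such preimages is a coset of ker φ_m ∩ Â[p^d]. -/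
def torsionSub (m : ℤ) (A : Type*) [AddCommGroup A] : AddSubgroup A where
  carrier := {a | m • a = 0}
  zero_mem' := smul_zero m
  add_mem' := by
    intro a b ha hb
    simp only [Set.mem_setOf_eq, smul_add] at *
    rw [ha, hb, add_zero]
  neg_mem' := by
    intro a ha
    simp only [Set.mem_setOf_eq, smul_neg] at *
    rw [ha, neg_zero]

def solSub {A Ahat : Type*} [AddCommGroup A] [AddCommGroup Ahat]
    (φl : A →+ Ahat) (φm : Ahat →+ A) (r s : ℤ) : AddSubgroup (A × Ahat) where
  carrier := {p | φl p.1 = -(r • p.2) ∧ φm p.2 = s • p.1}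
  zero_mem' := ⟨by simp, by simp⟩
  add_mem' := by
    rintro p q ⟨hp1, hp2⟩ ⟨hq1, hq2⟩
    refine ⟨?_, ?_⟩
    · show φl (p.1 + q.1) = -(r • (p.2 + q.2))
      rw [map_add, hp1, hq1, smul_add, neg_add]
    · show φm (p.2 + q.2) = s • (p.1 + q.1)
      rw [map_add, hp2, hq2, smul_add]
  neg_mem' := by
    rintro p ⟨hp1, hp2⟩
    refine ⟨?_, ?_⟩
    · show φl (-p.1) = -(r • (-p.2))
      rw [map_neg, hp1, smul_neg, neg_neg]
    · show φm (-p.2) = s • (-p.1)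
      rw [map_neg, hp2, smul_neg]


private lemma map_eq_of_card_aux {A B : Type*} [AddCommGroup A] [AddCommGroup B]
    (φ : A →+ B) (H : AddSubgroup A) (L : AddSubgroup B)
    (hle : AddSubgroup.map φ H ≤ L)
    (hH : Finite H) (hL : Finite L)
    (hcard : Nat.card ↥(φ.ker ⊓ H) * Nat.card L = Nat.card H) :
    AddSubgroup.map φ H = L := by
  set ψ := φ.comp H.subtype with hψ
  have hrange : ψ.range = AddSubgroup.map φ H := by
    rw [hψ, AddMonoidHom.range_comp, AddSubgroup.range_subtype]
  have hker : ψ.ker = φ.ker.addSubgroupOf H := by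
    rw [hψ, ← AddMonoidHom.comap_ker]; rfl
  have hkercard : Nat.card ψ.ker = Nat.card ↥(φ.ker ⊓ H) := by
    rw [hker, ← AddSubgroup.inf_addSubgroupOf_right]
    exact Nat.card_congr (AddSubgroup.addSubgroupOfEquivOfLe inf_le_right).toEquiv
  have h1 : Nat.card H = Nat.card ψ.range * Nat.card ψ.ker := by
    rw [AddSubgroup.card_eq_card_quotient_mul_card_addSubgroup ψ.ker]
    congr 1
    exact Nat.card_congr (QuotientAddGroup.quotientKerEquivRange ψ).toEquiv
  have hL0 : Nat.card ↥(φ.ker ⊓ H) ≠ 0 := by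
    have h0 : Nonempty ↥(φ.ker ⊓ H) := ⟨⟨0, (φ.ker ⊓ H).zero_mem⟩⟩
    have hfin : Finite ↥(φ.ker ⊓ H) :=
      Finite.of_equiv _ (AddSubgroup.addSubgroupOfEquivOfLe
        (inf_le_right : φ.ker ⊓ H ≤ H)).toEquiv
    exact Nat.card_ne_zero.mpr ⟨h0, hfin⟩
  have h2 : Nat.card ↥(φ.ker ⊓ H) * Nat.card ψ.range = Nat.card ↥(φ.ker ⊓ H) * Nat.card L := by
    rw [hcard, h1, hkercard]; ring
  have hcard2 : Nat.card ↥(AddSubgroup.map φ H) = Nat.card L := by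
    rw [← hrange]
    exact Nat.eq_of_mul_eq_mul_left (Nat.pos_of_ne_zero hL0) h2
  exact AddSubgroup.eq_of_le_of_card_ge hle (le_of_eq hcard2.symm)

/-- Claim 3.3 (a),(b): `φₘ(Â[p^d]) = ker φₗ ∩ A[p^d]` and `φₗ(A[p^d]) = ker φₘ ∩ Â[p^d]`;
in particular every `u ∈ ker φₗ ∩ A[p^d]` has a preimage under `φₘ` in `Â[p^d]`, and the set
of such preimages is a coset of `ker φₘ ∩ Â[p^d]`. -/
theorem image_of_pd_torsion_eq_ker_inter
    (A Ahat : Type*) [AddCommGroup A] [AddCommGroup Ahat]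
    (φl : A →+ Ahat) (φm : Ahat →+ A) (χ : ℤ)
    (hml : ∀ a : A, φm (φl a) = (-χ) • a)
    (hlm : ∀ b : Ahat, φl (φm b) = (-χ) • b)
    (p : ℕ) (hp : p.Prime) (d : ℕ) (hd : 1 ≤ d)
    (hdvd : ((p : ℤ) ^ d) ∣ χ)
    (hcardA : Nat.card ↥(torsionSub ((p : ℤ) ^ d) A) = p ^ (4 * d))
    (hcardAhat : Nat.card ↥(torsionSub ((p : ℤ) ^ d) Ahat) = p ^ (4 * d))
    (hkerl : Nat.card ↥(φl.ker ⊓ torsionSub ((p : ℤ) ^ d) A) = p ^ (2 * d))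
    (hkerm : Nat.card ↥(φm.ker ⊓ torsionSub ((p : ℤ) ^ d) Ahat) = p ^ (2 * d)) :
    (AddSubgroup.map φm (torsionSub ((p : ℤ) ^ d) Ahat) = φl.ker ⊓ torsionSub ((p : ℤ) ^ d) A) ∧
    (AddSubgroup.map φl (torsionSub ((p : ℤ) ^ d) A) = φm.ker ⊓ torsionSub ((p : ℤ) ^ d) Ahat) ∧
    (∀ u ∈ φl.ker ⊓ torsionSub ((p : ℤ) ^ d) A,
      ∃ b ∈ torsionSub ((p : ℤ) ^ d) Ahat, φm b = u ∧
        {y : Ahat | y ∈ torsionSub ((p : ℤ) ^ d) Ahat ∧ φm y = u} =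
          (fun z => b + z) '' ((φm.ker ⊓ torsionSub ((p : ℤ) ^ d) Ahat : AddSubgroup Ahat) :
            Set Ahat)) := by
  have hpd : (0:ℕ) < p ^ (4*d) := pow_pos hp.pos _
  have hfinA : Finite ↥(torsionSub ((p:ℤ)^d) A) :=
    (Nat.card_ne_zero.mp (by rw [hcardA]; exact hpd.ne')).2
  have hfinAhat : Finite ↥(torsionSub ((p:ℤ)^d) Ahat) :=
    (Nat.card_ne_zero.mp (by rw [hcardAhat]; exact hpd.ne')).2
  have hfinKl : Finite ↥(φl.ker ⊓ torsionSub ((p:ℤ)^d) A) :=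
    (Nat.card_ne_zero.mp (by rw [hkerl]; exact (pow_pos hp.pos _).ne')).2
  have hfinKm : Finite ↥(φm.ker ⊓ torsionSub ((p:ℤ)^d) Ahat) :=
    (Nat.card_ne_zero.mp (by rw [hkerm]; exact (pow_pos hp.pos _).ne')).2
  obtain ⟨c, hc⟩ := hdvd
  have hchiA : ∀ (x : A), ((p:ℤ)^d) • x = 0 → (-χ) • x = 0 := by
    intro x hx
    rw [hc, mul_comm, neg_smul, mul_smul, hx, smul_zero, neg_zero]
  have hchiAhat : ∀ (x : Ahat), ((p:ℤ)^d) • x = 0 → (-χ) • x = 0 := by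
    intro x hx
    rw [hc, mul_comm, neg_smul, mul_smul, hx, smul_zero, neg_zero]
  have hle1 : AddSubgroup.map φm (torsionSub ((p:ℤ)^d) Ahat) ≤
      φl.ker ⊓ torsionSub ((p:ℤ)^d) A := by
    rintro _ ⟨b, hb, rfl⟩
    refine ⟨?_, ?_⟩
    · show φl (φm b) = 0
      rw [hlm b]
      have hb' : ((p:ℤ)^d) • b = 0 := hb
      exact hchiAhat b hb'
    · show ((p:ℤ)^d) • φm b = 0
      rw [← map_zsmul, hb, map_zero]
  have hle2 : AddSubgroup.map φl (torsionSub ((p:ℤ)^d) A) ≤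
      φm.ker ⊓ torsionSub ((p:ℤ)^d) Ahat := by
    rintro _ ⟨a, ha, rfl⟩
    refine ⟨?_, ?_⟩
    · show φm (φl a) = 0
      rw [hml a]
      have ha' : ((p:ℤ)^d) • a = 0 := ha
      exact hchiA a ha'
    · show ((p:ℤ)^d) • φl a = 0
      rw [← map_zsmul, ha, map_zero]
  have hcardmul : p ^ (2*d) * p ^ (2*d) = p ^ (4*d) := by
    rw [← pow_add]; ring_nf
  have h1 : AddSubgroup.map φm (torsionSub ((p:ℤ)^d) Ahat) =
      φl.ker ⊓ torsionSub ((p:ℤ)^d) A :=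
    map_eq_of_card_aux φm _ _ hle1 hfinAhat hfinKl
      (by rw [hkerm, hkerl, hcardAhat]; exact hcardmul)
  have h2 : AddSubgroup.map φl (torsionSub ((p:ℤ)^d) A) =
      φm.ker ⊓ torsionSub ((p:ℤ)^d) Ahat :=
    map_eq_of_card_aux φl _ _ hle2 hfinA hfinKm
      (by rw [hkerl, hkerm, hcardA]; exact hcardmul)
  refine ⟨h1, h2, ?_⟩
  intro u hu
  rw [← h1] at hu
  obtain ⟨b, hb, hbu⟩ := hu
  refine ⟨b, hb, hbu, ?_⟩
  ext y
  constructor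
  · rintro ⟨hy, hyu⟩
    refine ⟨y - b, ⟨?_, ?_⟩, by show b + (y - b) = y; abel⟩
    · show φm (y - b) = 0
      rw [map_sub, hyu, hbu, sub_self]
    · show ((p:ℤ)^d) • (y - b) = 0
      rw [smul_sub, hy, hb, sub_self]
  · rintro ⟨z, ⟨hz1, hz2⟩, rfl⟩
    refine ⟨?_, ?_⟩
    · show ((p:ℤ)^d) • (b + z) = 0
      rw [smul_add, hb, hz2, add_zero]
    · show φm (b + z) = u
      rw [map_add, hbu, hz1, add_zero]
end

section
/- Let A and Â be abelian groups, φ_l : A → Â and φ_m : Â → A group homomorphisms, and r, s, χ integers such that φ_m ∘ φ_l equals multiplication by −χ on A and φ_l ∘ φ_m equals multiplication by −χ on Â. Let p be a prime and q ≥ 1 with p^q ∣ χ and p^q ∣ r. Assume A[p^q] and Â[p^q] have order p^{4q}, and that ker φ_l ∩ A[p^q] ≅ (ℤ/p^qℤ)² and ker φ_m ∩ Â[p^q] ≅ (ℤ/p^qℤ)². Then G ∩ (A[p^q] × Â[p^q]) ≅ (ℤ/p^qℤ)⁴, where G := {(x,y) ∈ A × Â : φ_l(x) = −r·y and φ_m(y)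 = s·x}. -/
/-! Because `p^q ∣ r`, on `p^q`-torsion the first equation of `G` reads `φ_l x = 0`, so
`(x, y) ↦ x` maps `G ∩ (A[p^q] × Â[p^q])` to `ker φ_l ∩ A[p^q]` with kernel
`0 × (ker φ_m ∩ Â[p^q])`. It is onto: `φ_l ∘ φ_m = -χ` kills `Â[p^q]`, so `φ_m` maps `Â[p^q]` into
`ker φ_l ∩ A[p^q]`, and counting (`p^{4q} = p^{2q} · p^{2q}`) shows it maps onto it; given `x`, pick
`y` with `φ_m y = s x`. As the quotient is free over `ℤ/p^q`, the extension splits. -/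

open Function

theorem Function.Exact.nonempty_addEquiv_prod {n : ℕ} {K H L ι : Type*} [AddCommGroup K]
    [AddCommGroup H] [AddCommGroup L] [Finite ι] {i : K →+ H} {π : H →+ L} (hexact : Exact i π)
    (hi : Injective i) (hπ : Surjective π) (hH : ∀ x : H, n • x = 0) (e : L ≃+ (ι → ZMod n)) :
    Nonempty (H ≃+ K × L) := by
  let _ := AddCommGroup.zmodModule hH
  let _ := AddCommGroup.zmodModule (n := n) (G := K) fun k =>
    hi (by rw [map_nsmul, hH, map_zero])
  let _ := AddCommGroup.zmodModule (n := n) (G := L) fun l => e.injective (by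
    rw [map_nsmul, map_zero, ← Nat.cast_smul_eq_nsmul (ZMod n), ZMod.natCast_self, zero_smul])
  let eₗ : L ≃ₗ[ZMod n] (ι → ZMod n) := { e with map_smul' := ZMod.map_smul e }
  obtain ⟨σ, hσ⟩ := Module.projective_lifting_property (h := .of_equiv' eₗ.symm)
    (π.toZModLinearMap n) .id hπ
  exact ⟨(hexact.splitSurjectiveEquiv (f := i.toZModLinearMap n) (g := π.toZModLinearMap n)
    hi ⟨σ, hσ⟩).1.toAddEquiv⟩

theorem AddSubgroup.card_inf_ker_mul_card_map {G G' : Type*} [AddGroup G] [AddGroup G']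
    (f : G →+ G') (T : AddSubgroup G) :
    Nat.card ↥(f.ker ⊓ T) * Nat.card (T.map f) = Nat.card T := by
  rw [← relIndex_ker, ← inf_relIndex_right, ← relIndex_bot_left, ← relIndex_bot_left T]
  exact relIndex_mul_relIndex _ _ _ bot_le inf_le_right

section torsionSub

variable {A B : Type*} [AddCommGroup A] [AddCommGroup B]

theorem mem_torsionSub {m : ℤ} {a : A} : a ∈ torsionSub m A ↔ m • a = 0 := Iff.rfl

theorem zsmul_eq_zero_of_mem_torsionSub {m k : ℤ} (hmk : m ∣ k) {a : A}
    (ha : a ∈ torsionSub m A) : k • a = 0 := by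
  obtain ⟨c, rfl⟩ := hmk
  rw [mul_comm, mul_smul, ha, smul_zero]

theorem torsionSub_prod (m : ℤ) :
    torsionSub m (A × B) = (torsionSub m A).prod (torsionSub m B) := by
  ext
  simp [AddSubgroup.mem_prod, mem_torsionSub, Prod.ext_iff]

theorem AddSubgroup.nsmul_eq_zero_of_le_torsionSub {n : ℕ} {S : AddSubgroup A}
    (h : S ≤ torsionSub n A) (x : S) : n • x = 0 :=
  Subtype.ext <| by
    simpa only [AddSubgroup.coe_nsmul, AddSubgroup.coe_zero, natCast_zsmul]
      using mem_torsionSub.1 (h x.2)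

theorem map_torsionSub_le (f : A →+ B) (m : ℤ) : (torsionSub m A).map f ≤ torsionSub m B := by
  rintro _ ⟨a, ha, rfl⟩
  rw [mem_torsionSub, ← map_zsmul, ha, map_zero]

end torsionSub

section solSub

variable {A B : Type*} [AddCommGroup A] [AddCommGroup B] {φl : A →+ B} {φm : B →+ A}
  {r s χ m : ℤ}

theorem map_torsionSub_le_ker_inf (hlm : ∀ b : B, φl (φm b) = (-χ) • b) (hχ : m ∣ χ) :
    (torsionSub m B).map φm ≤ φl.ker ⊓ torsionSub m A := by
  refine le_inf ?_ (map_torsionSub_le φm m)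
  rintro _ ⟨b, hb, rfl⟩
  rw [AddMonoidHom.mem_ker, hlm, neg_smul, zsmul_eq_zero_of_mem_torsionSub hχ hb, neg_zero]

theorem map_torsionSub_eq_ker_inf (hlm : ∀ b : B, φl (φm b) = (-χ) • b) (hχ : m ∣ χ)
    [Finite (torsionSub m B)]
    (hcard : Nat.card (torsionSub m B) =
      Nat.card ↥(φm.ker ⊓ torsionSub m B) * Nat.card ↥(φl.ker ⊓ torsionSub m A)) :
    (torsionSub m B).map φm = φl.ker ⊓ torsionSub m A := by
  have hT : Nat.card (torsionSub m B) ≠ 0 := Nat.card_pos.ne'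
  rw [hcard] at hT
  have : Finite ↥(φl.ker ⊓ torsionSub m A) :=
    Nat.finite_of_card_ne_zero (right_ne_zero_of_mul hT)
  refine AddSubgroup.eq_of_le_of_card_ge (map_torsionSub_le_ker_inf hlm hχ)
    (Nat.le_of_mul_le_mul_left ?_ (Nat.pos_of_ne_zero (left_ne_zero_of_mul hT)))
  rw [AddSubgroup.card_inf_ker_mul_card_map, hcard]

theorem mem_solSub {z : A × B} :
    z ∈ solSub φl φm r s ↔ φl z.1 = -(r • z.2) ∧ φm z.2 = s • z.1 := Iff.rfl

variable (φl φm r s m) in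
abbrev solSubTorsion : AddSubgroup (A × B) :=
  solSub φl φm r s ⊓ (torsionSub m A).prod (torsionSub m B)

theorem fst_mem_ker_inf_of_mem_solSubTorsion (hr : m ∣ r) {z : A × B}
    (hz : z ∈ solSubTorsion φl φm r s m) : z.1 ∈ φl.ker ⊓ torsionSub m A := by
  obtain ⟨⟨hl, -⟩, hx, hy⟩ := hz
  refine AddSubgroup.mem_inf.2 ⟨?_, hx⟩
  rw [AddMonoidHom.mem_ker, hl, zsmul_eq_zero_of_mem_torsionSub hr hy, neg_zero]

theorem zero_mk_mem_solSubTorsion_iff (hr : m ∣ r) {y : B} :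
    ((0, y) : A × B) ∈ solSubTorsion φl φm r s m ↔ y ∈ φm.ker ⊓ torsionSub m B := by
  simp only [solSubTorsion, AddSubgroup.mem_inf, AddSubgroup.mem_prod, mem_solSub,
    AddMonoidHom.mem_ker, map_zero, smul_zero, zero_mem, true_and]
  constructor
  · rintro ⟨⟨-, hm⟩, hy⟩
    exact ⟨hm, hy⟩
  · rintro ⟨hm, hy⟩
    exact ⟨⟨by rw [zsmul_eq_zero_of_mem_torsionSub hr hy, neg_zero], hm⟩, hy⟩

theorem exists_mk_mem_solSubTorsion (hr : m ∣ r)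
    (hmap : (torsionSub m B).map φm = φl.ker ⊓ torsionSub m A) {x : A}
    (hx : x ∈ φl.ker ⊓ torsionSub m A) : ∃ y, (x, y) ∈ solSubTorsion φl φm r s m := by
  obtain ⟨hxl, hxm⟩ := AddSubgroup.mem_inf.1 hx
  obtain ⟨y, hy, hφy⟩ := hmap ▸ zsmul_mem hx s
  refine ⟨y, ⟨?_, hφy⟩, hxm, hy⟩
  rw [AddMonoidHom.mem_ker.1 hxl, zsmul_eq_zero_of_mem_torsionSub hr hy, neg_zero]

theorem nonempty_solSubTorsion_addEquiv_prod {n : ℕ} {ι : Type*} [Finite ι]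
    (hlm : ∀ b : B, φl (φm b) = (-χ) • b) (hχ : (n : ℤ) ∣ χ) (hr : (n : ℤ) ∣ r)
    [Finite (torsionSub n B)]
    (hcard : Nat.card (torsionSub n B) =
      Nat.card ↥(φm.ker ⊓ torsionSub n B) * Nat.card ↥(φl.ker ⊓ torsionSub n A))
    (e : ↥(φl.ker ⊓ torsionSub n A) ≃+ (ι → ZMod n)) :
    Nonempty (solSubTorsion φl φm r s n ≃+
      ↥(φm.ker ⊓ torsionSub n B) × ↥(φl.ker ⊓ torsionSub n A)) := by
  let i : ↥(φm.ker ⊓ torsionSub n B) →+ solSubTorsion φl φm r s n :=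
    ((AddMonoidHom.inr A B).comp (AddSubgroup.subtype _)).codRestrict _
      fun y => (zero_mk_mem_solSubTorsion_iff hr).2 y.2
  let π : solSubTorsion φl φm r s n →+ ↥(φl.ker ⊓ torsionSub n A) :=
    ((AddMonoidHom.fst A B).comp (AddSubgroup.subtype _)).codRestrict _
      fun z => fst_mem_ker_inf_of_mem_solSubTorsion hr z.2
  refine Exact.nonempty_addEquiv_prod (i := i) (π := π) ?exact ?inj ?surj
    (AddSubgroup.nsmul_eq_zero_of_le_torsionSub (inf_le_right.trans (torsionSub_prod _).ge)) e
  case exact =>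
    rintro ⟨⟨x, y⟩, hz⟩
    constructor
    · intro hx
      obtain rfl : x = 0 := congrArg Subtype.val hx
      exact ⟨⟨y, (zero_mk_mem_solSubTorsion_iff hr).1 hz⟩, rfl⟩
    · rintro ⟨k, hk⟩
      rw [← hk]
      rfl
  case inj => exact fun a b h => Subtype.ext (congrArg (fun z => z.1.2) h)
  case surj =>
    rintro ⟨x, hx⟩
    obtain ⟨y, hy⟩ :=
      exists_mk_mem_solSubTorsion hr (map_torsionSub_eq_ker_inf hlm hχ hcard) hx
    exact ⟨⟨(x, y), hy⟩, rfl⟩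

end solSub

theorem solSub_pq_torsion_iso_general
    (A Ahat : Type*) [AddCommGroup A] [AddCommGroup Ahat]
    (φl : A →+ Ahat) (φm : Ahat →+ A) (r s χ : ℤ)
    (hlm : ∀ b : Ahat, φl (φm b) = (-χ) • b)
    (p : ℕ) (hp : p.Prime) (q : ℕ)
    (hχ : ((p : ℤ) ^ q) ∣ χ) (hr : ((p : ℤ) ^ q) ∣ r)
    (hcardAhat : Nat.card ↥(torsionSub ((p : ℤ) ^ q) Ahat) = p ^ (4 * q))
    (hkl : Nonempty (↥(φl.ker ⊓ torsionSub ((p : ℤ) ^ q) A) ≃+ (Fin 2 → ZMod (p ^ q))))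
    (hkm : Nonempty (↥(φm.ker ⊓ torsionSub ((p : ℤ) ^ q) Ahat) ≃+ (Fin 2 → ZMod (p ^ q)))) :
    Nonempty (↥(solSub φl φm r s ⊓
        (torsionSub ((p : ℤ) ^ q) A).prod (torsionSub ((p : ℤ) ^ q) Ahat)) ≃+
      (Fin 4 → ZMod (p ^ q))) := by
  obtain ⟨el⟩ := hkl
  obtain ⟨em⟩ := hkm
  have : NeZero (p ^ q) := ⟨pow_ne_zero q hp.ne_zero⟩
  have hcard2 : Nat.card (Fin 2 → ZMod (p ^ q)) = p ^ (2 * q) := by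
    simp [pow_mul']
  rw [← Nat.cast_pow] at hχ hr hcardAhat el em ⊢
  have : Finite (torsionSub ((p ^ q : ℕ) : ℤ) Ahat) :=
    Nat.finite_of_card_ne_zero (hcardAhat ▸ pow_ne_zero _ hp.ne_zero)
  obtain ⟨e⟩ := nonempty_solSubTorsion_addEquiv_prod (s := s) hlm hχ hr (by
    rw [hcardAhat, Nat.card_congr el.toEquiv, Nat.card_congr em.toEquiv, hcard2, ← pow_add]
    ring_nf) el
  exact ⟨e.trans ((em.prodCongr el).trans
    ((RingEquiv.sumArrowEquivProdArrow _ _ _).symm.toAddEquiv.trans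
      (RingEquiv.piCongrLeft (fun _ => ZMod (p ^ q)) (finSumFinEquiv (m := 2) (n := 2))
        ).toAddEquiv))⟩

/-- Case 3 of Claim 3.5: if `p^q ∣ χ` and `p^q ∣ r`, and the kernels of `φₗ`, `φₘ` meet the
`p^q`-torsion in groups isomorphic to `(ℤ/p^qℤ)²`, then
`G ∩ (A[p^q] × Â[p^q]) ≅ (ℤ/p^qℤ)⁴`. -/
theorem solSub_pq_torsion_iso
    (A Ahat : Type*) [AddCommGroup A] [AddCommGroup Ahat]
    (φl : A →+ Ahat) (φm : Ahat →+ A) (r s χ : ℤ)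
    (hml : ∀ a : A, φm (φl a) = (-χ) • a)
    (hlm : ∀ b : Ahat, φl (φm b) = (-χ) • b)
    (p : ℕ) (hp : p.Prime) (q : ℕ) (hq : 1 ≤ q)
    (hχ : ((p : ℤ) ^ q) ∣ χ) (hr : ((p : ℤ) ^ q) ∣ r)
    (hcardA : Nat.card ↥(torsionSub ((p : ℤ) ^ q) A) = p ^ (4 * q))
    (hcardAhat : Nat.card ↥(torsionSub ((p : ℤ) ^ q) Ahat) = p ^ (4 * q))
    (hkl : Nonempty (↥(φl.ker ⊓ torsionSub ((p : ℤ) ^ q) A) ≃+ (Fin 2 → ZMod (p ^ q))))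
    (hkm : Nonempty (↥(φm.ker ⊓ torsionSub ((p : ℤ) ^ q) Ahat) ≃+ (Fin 2 → ZMod (p ^ q)))) :
    Nonempty (↥(solSub φl φm r s ⊓
        (torsionSub ((p : ℤ) ^ q) A).prod (torsionSub ((p : ℤ) ^ q) Ahat)) ≃+
      (Fin 4 → ZMod (p ^ q))) :=
  solSub_pq_torsion_iso_general A Ahat φl φm r s χ hlm p hp q hχ hr hcardAhat hkl hkm
end
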